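/- The stellar mirror entanglement is bounded below by a rescaled linear entropy: for every probability vector p of length d (d ≥ 2), min over permutations σ of (1 − |∑_j ω^j p_{σ(j)}|^2) ≥ 2 sin²(π/d) (1 − ∑_j p_j^2), where ω = e^{2πi/d}. -/

import Mathlib

/-!
Write `z_j = ω^j` and `q_j = p_{σ(j)}`. For weights `q` summing to one and unit vectors `z_j`,
`1 - ‖∑ q_j z_j‖² = ½ ∑_{j,k} q_j q_k ‖z_j - z_k‖²`, so a lower bound `c` on the squared
distances of distinct points gives `1 - ‖∑ q_j z_j‖² ≥ (c/2) ∑_{j ≠ k} q_j q_k = (c/2)(1 - ∑ q_j²)`.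
Distinct `d`-th roots of unity are at distance `2 |sin(π m / d)| ≥ 2 sin(π/d)` with `0 < m < d`,
by concavity of `sin` on `[0, π]`.
-/

open Finset Real
open Complex (I)

section WeightedSum

variable {ι E : Type*} [Fintype ι] [NormedAddCommGroup E] [InnerProductSpace ℝ E]

theorem sum_sum_mul_norm_sub_sq (q : ι → ℝ) (z : ι → E) :
    ∑ j, ∑ k, q j * q k * ‖z j - z k‖ ^ 2 =
      2 * ((∑ j, q j) * ∑ j, q j * ‖z j‖ ^ 2 - ‖∑ j, q j • z j‖ ^ 2) := by
  have hsq : ‖∑ j, q j • z j‖ ^ 2 = ∑ j, ∑ k, q j * q k * inner ℝ (z j) (z k) := by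
    rw [← real_inner_self_eq_norm_sq, sum_inner]
    simp_rw [inner_sum, real_inner_smul_left, real_inner_smul_right]
    exact sum_congr rfl fun j _ => sum_congr rfl fun k _ => by ring
  have hleft : ∑ j, ∑ k, q j * q k * ‖z j‖ ^ 2 = (∑ j, q j) * ∑ j, q j * ‖z j‖ ^ 2 := by
    rw [mul_comm, sum_mul_sum]
    exact sum_congr rfl fun j _ => sum_congr rfl fun k _ => by ring
  have hright : ∑ j, ∑ k, q j * q k * ‖z k‖ ^ 2 = (∑ j, q j) * ∑ j, q j * ‖z j‖ ^ 2 := by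
    rw [sum_mul_sum]
    exact sum_congr rfl fun j _ => sum_congr rfl fun k _ => by ring
  have hexpand : ∀ j k, q j * q k * ‖z j - z k‖ ^ 2 = q j * q k * ‖z j‖ ^ 2 +
      q j * q k * ‖z k‖ ^ 2 - 2 * (q j * q k * inner ℝ (z j) (z k)) := by
    intro j k
    rw [norm_sub_sq_real]
    ring
  simp only [hexpand, sum_sub_distrib, sum_add_distrib, ← mul_sum, hleft, hright, hsq]
  ring

theorem mul_one_sub_sum_sq_le_of_pairwise_le_norm_sub_sq {q : ι → ℝ} (hq : ∀ j, 0 ≤ q j)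
    (hq1 : ∑ j, q j = 1) {z : ι → E} (hz : ∀ j, ‖z j‖ = 1) {c : ℝ}
    (hc : Pairwise fun j k => c ≤ ‖z j - z k‖ ^ 2) :
    c * (1 - ∑ j, q j ^ 2) ≤ 2 * (1 - ‖∑ j, q j • z j‖ ^ 2) := by
  classical
  have hrow : ∀ j, c * (q j - q j ^ 2) ≤ ∑ k, q j * q k * ‖z j - z k‖ ^ 2 := by
    intro j
    have hrest : ∑ k ∈ univ.erase j, q k = 1 - q j := by
      rw [← hq1, ← add_sum_erase _ _ (mem_univ j), add_sub_cancel_left]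
    calc c * (q j - q j ^ 2) = ∑ k ∈ univ.erase j, q j * q k * c := by
          rw [← sum_mul, ← mul_sum, hrest]; ring
      _ ≤ ∑ k ∈ univ.erase j, q j * q k * ‖z j - z k‖ ^ 2 :=
          sum_le_sum fun k hk => mul_le_mul_of_nonneg_left
            (hc (ne_of_mem_erase hk).symm) (mul_nonneg (hq j) (hq k))
      _ = ∑ k, q j * q k * ‖z j - z k‖ ^ 2 := by
          rw [← add_sum_erase _ _ (mem_univ j), sub_self, norm_zero]; ring
  calc c * (1 - ∑ j, q j ^ 2) = ∑ j, c * (q j - q j ^ 2) := by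
        rw [← mul_sum, sum_sub_distrib, hq1]
    _ ≤ ∑ j, ∑ k, q j * q k * ‖z j - z k‖ ^ 2 := sum_le_sum fun j _ => hrow j
    _ = 2 * (1 - ‖∑ j, q j • z j‖ ^ 2) := by simp [sum_sum_mul_norm_sub_sq, hz, hq1]

end WeightedSum

theorem sin_le_sin_of_mem_Icc_pi_sub {a x : ℝ} (ha : 0 ≤ a) (hx : x ∈ Set.Icc a (π - a)) :
    sin a ≤ sin x := by
  have hapi : a ≤ π - a := hx.1.trans hx.2
  have hmin := strictConcaveOn_sin_Icc.concaveOn.ge_on_segment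
    (⟨ha, by linarith⟩ : a ∈ Set.Icc 0 π) (⟨by linarith, by linarith⟩ : π - a ∈ Set.Icc 0 π)
    (by rwa [segment_eq_Icc hapi])
  rwa [sin_pi_sub, min_self] at hmin

theorem norm_exp_two_pi_I_mul_div (x : ℝ) (n : ℕ) : ‖Complex.exp (2 * π * I * x / n)‖ = 1 := by
  rw [Complex.norm_exp]
  simp

theorem two_mul_sin_pi_div_le_norm_exp_sub_exp {d j k : ℕ} (hkj : k < j) (hjd : j < d) :
    2 * sin (π / d) ≤
      ‖Complex.exp (2 * π * I * (j : ℝ) / d) - Complex.exp (2 * π * I * (k : ℝ) / d)‖ := by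
  have hd : (0 : ℝ) < d := by exact_mod_cast (Nat.zero_le k).trans_lt (hkj.trans hjd)
  have hfactor : Complex.exp (2 * π * I * (j : ℝ) / d) - Complex.exp (2 * π * I * (k : ℝ) / d) =
      Complex.exp (2 * π * I * (k : ℝ) / d) *
        (Complex.exp (I * ↑(2 * π * ((j : ℝ) - k) / d)) - 1) := by
    rw [mul_sub, ← Complex.exp_add, mul_one]
    congr 2
    push_cast
    ring
  have hsin : sin (π / d) ≤ sin (2 * π * ((j : ℝ) - k) / d / 2) := by
    have hkj' : (k : ℝ) + 1 ≤ j := by exact_mod_cast hkj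
    have hjd' : (j : ℝ) + 1 ≤ d := by exact_mod_cast hjd
    rw [show 2 * π * ((j : ℝ) - k) / d / 2 = π * (j - k) / d by ring]
    apply sin_le_sin_of_mem_Icc_pi_sub (by positivity)
    constructor
    · gcongr
      nlinarith [pi_pos]
    · rw [le_sub_iff_add_le, ← add_div, div_le_iff₀ hd]
      nlinarith [pi_pos]
  rw [hfactor, norm_mul, norm_exp_two_pi_I_mul_div, one_mul,
    Complex.norm_exp_I_mul_ofReal_sub_one, norm_mul, Real.norm_two, Real.norm_eq_abs]
  exact mul_le_mul_of_nonneg_left (hsin.trans (le_abs_self _)) zero_le_two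

theorem pairwise_four_mul_sin_sq_le_norm_exp_sub_exp_sq (d : ℕ) :
    Pairwise fun j k : Fin d => 4 * sin (π / d) ^ 2 ≤
      ‖Complex.exp (2 * π * I * (j.val : ℝ) / d) -
        Complex.exp (2 * π * I * (k.val : ℝ) / d)‖ ^ 2 := by
  intro j k hjk
  have hd : (1 : ℝ) ≤ d := by exact_mod_cast j.pos
  have hsin : 0 ≤ 2 * sin (π / d) := mul_nonneg zero_le_two
    (sin_nonneg_of_nonneg_of_le_pi (by positivity) (div_le_self pi_pos.le hd))
  rw [show 4 * sin (π / d) ^ 2 = (2 * sin (π / d)) ^ 2 by ring]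
  refine pow_le_pow_left₀ hsin ?_ 2
  rcases lt_or_gt_of_ne (Fin.val_ne_of_ne hjk) with hlt | hgt
  · rw [norm_sub_rev]
    exact two_mul_sin_pi_div_le_norm_exp_sub_exp hlt k.isLt
  · exact two_mul_sin_pi_div_le_norm_exp_sub_exp hgt j.isLt

theorem stellar_ge_rescaled_linear_entropy_general (d : ℕ)
    (p : Fin d → ℝ) (hp : ∀ j, 0 ≤ p j) (hsum : ∑ j, p j = 1) :
    ∀ σ : Equiv.Perm (Fin d),
      2 * Real.sin (π / d) ^ 2 * (1 - ∑ j, (p j) ^ 2) ≤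
        1 - (‖∑ j : Fin d,
          Complex.exp (2 * π * Complex.I * (j.val : ℝ) / d) * (p (σ j) : ℂ)‖) ^ 2 := by
  intro σ
  have key := mul_one_sub_sum_sq_le_of_pairwise_le_norm_sub_sq (fun j => hp (σ j))
    ((Equiv.sum_comp σ p).trans hsum) (fun j => norm_exp_two_pi_I_mul_div _ _)
    (pairwise_four_mul_sin_sq_le_norm_exp_sub_exp_sq d)
  simp only [Equiv.sum_comp σ (fun j => p j ^ 2), Complex.real_smul, mul_comm (p (σ _) : ℂ)]
    at key
  linarith

/-- The stellar mirror entanglement is bounded below by a rescaled linear entropy: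
for every permutation `σ`, `1 − |∑_j ω^j p_{σ(j)}|² ≥ 2 sin²(π/d) (1 − ∑_j p_j²)`. -/
theorem stellar_ge_rescaled_linear_entropy (d : ℕ) (hd : 2 ≤ d)
    (p : Fin d → ℝ) (hp : ∀ j, 0 ≤ p j) (hsum : ∑ j, p j = 1) :
    ∀ σ : Equiv.Perm (Fin d),
      2 * Real.sin (π / d) ^ 2 * (1 - ∑ j, (p j) ^ 2) ≤
        1 - (‖∑ j : Fin d,
          Complex.exp (2 * π * Complex.I * (j.val : ℝ) / d) * (p (σ j) : ℂ)‖) ^ 2 :=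
  stellar_ge_rescaled_linear_entropy_general d p hp hsum
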